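/- arXiv:1402.3753 — 2 statements merged into one kernel-verified Lean document; each statement's English description precedes it below -/
import Mathlib

section
/- Let (M, ‖·‖) be a real normed space, x₁, x₂, x₃, p₄ ∈ M with ‖p₄ − xᵢ‖ = λ for i = 1,2,3. Define mᵢ = (xⱼ+xₖ)/2 and pᵢ = 2mᵢ − p₄ for {i,j,k}={1,2,3}, q = (x₁+x₂+x₃−p₄)/2, and dᵢ = 2q − mᵢ. Then all six points m₁, m₂, m₃, d₁, d₂, d₃ lie on the circle of center q and radius λ/2, i.e. ‖q − mᵢ‖ = ‖q − dᵢ‖ = λ/2 for i = 1,2,3. -/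
lemma half_norm {M : Type*} [NormedAddCommGroup M] [NormedSpace ℝ M]
    (v : M) : ‖(2⁻¹ : ℝ) • v‖ = ‖v‖ / 2 := by
  rw [norm_smul]; simp [div_eq_inv_mul]

theorem stmt7 {M : Type*} [NormedAddCommGroup M] [NormedSpace ℝ M]
    (x₁ x₂ x₃ p₄ m₁ m₂ m₃ p₁ p₂ p₃ q d₁ d₂ d₃ : M) (lam : ℝ)
    (h₁ : ‖p₄ - x₁‖ = lam) (h₂ : ‖p₄ - x₂‖ = lam) (h₃ : ‖p₄ - x₃‖ = lam)
    (hm₁ : m₁ = (2⁻¹ : ℝ) • (x₂ + x₃)) (hm₂ : m₂ = (2⁻¹ : ℝ) • (x₁ + x₃))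
    (hm₃ : m₃ = (2⁻¹ : ℝ) • (x₁ + x₂))
    (hp₁ : p₁ = (2 : ℝ) • m₁ - p₄) (hp₂ : p₂ = (2 : ℝ) • m₂ - p₄)
    (hp₃ : p₃ = (2 : ℝ) • m₃ - p₄)
    (hq : q = (2⁻¹ : ℝ) • (x₁ + x₂ + x₃ - p₄))
    (hd₁ : d₁ = (2 : ℝ) • q - m₁) (hd₂ : d₂ = (2 : ℝ) • q - m₂)
    (hd₃ : d₃ = (2 : ℝ) • q - m₃) :
    ‖q - m₁‖ = lam / 2 ∧ ‖q - m₂‖ = lam / 2 ∧ ‖q - m₃‖ = lam / 2 ∧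
    ‖q - d₁‖ = lam / 2 ∧ ‖q - d₂‖ = lam / 2 ∧ ‖q - d₃‖ = lam / 2 := by
  have e₁ : q - m₁ = (2⁻¹ : ℝ) • (x₁ - p₄) := by
    rw [hq, hm₁]; module
  have e₂ : q - m₂ = (2⁻¹ : ℝ) • (x₂ - p₄) := by
    rw [hq, hm₂]; module
  have e₃ : q - m₃ = (2⁻¹ : ℝ) • (x₃ - p₄) := by
    rw [hq, hm₃]; module
  have n₁ : ‖q - m₁‖ = lam / 2 := by
    rw [e₁, half_norm, ← norm_neg, neg_sub, h₁]
  have n₂ : ‖q - m₂‖ = lam / 2 := by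
    rw [e₂, half_norm, ← norm_neg, neg_sub, h₂]
  have n₃ : ‖q - m₃‖ = lam / 2 := by
    rw [e₃, half_norm, ← norm_neg, neg_sub, h₃]
  have f : ∀ d m : M, d = (2:ℝ) • q - m → ‖q - d‖ = ‖q - m‖ := by
    intro d m hd
    rw [hd, ← norm_neg]
    congr 1
    module
  exact ⟨n₁, n₂, n₃, (f d₁ m₁ hd₁).trans n₁, (f d₂ m₂ hd₂).trans n₂,
    (f d₃ m₃ hd₃).trans n₃⟩
end

section
/- Let (M, ‖·‖) be a real normed space and x, z ∈ M with z ≠ 0. Set λ = ‖x + z‖ and suppose x ⊥_I z (i.e. ‖x+z‖ = ‖x−z‖). Define p₃ = −z, q = (λ/(2‖z‖))·z, p₁ = 2q − x, p₂ = 2q + x. Then ‖p₃ − p₁‖ = ‖x − (1 + λ/‖z‖)·z‖ and ‖p₃ − p₂‖ = ‖x + (1 + λ/‖z‖)·z‖; consequently, if ‖p₃ − p₁‖ = ‖p₃ − p₂‖ then x ⊥_I t·z where t = 1 + λ/‖z‖ > 1. -/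
theorem stmt10 {M : Type*} [NormedAddCommGroup M] [NormedSpace ℝ M]
    (x z p₃ q p₁ p₂ : M) (lam : ℝ) (hz : z ≠ 0)
    (hlam : lam = ‖x + z‖) (hI : ‖x + z‖ = ‖x - z‖)
    (hp₃ : p₃ = -z) (hq : q = (lam / (2 * ‖z‖)) • z)
    (hp₁ : p₁ = (2 : ℝ) • q - x) (hp₂ : p₂ = (2 : ℝ) • q + x) :
    ‖p₃ - p₁‖ = ‖x - (1 + lam / ‖z‖) • z‖ ∧
    ‖p₃ - p₂‖ = ‖x + (1 + lam / ‖z‖) • z‖ ∧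
    (‖p₃ - p₁‖ = ‖p₃ - p₂‖ →
      ‖x + (1 + lam / ‖z‖) • z‖ = ‖x - (1 + lam / ‖z‖) • z‖ ∧
      1 < 1 + lam / ‖z‖) := by
  have hzn : ‖z‖ ≠ 0 := norm_ne_zero_iff.mpr hz
  have h2q : (2 : ℝ) • q = (lam / ‖z‖) • z := by
    rw [hq, smul_smul]
    congr 1
    field_simp
  have e1 : p₃ - p₁ = x - (1 + lam / ‖z‖) • z := by
    rw [hp₃, hp₁, h2q, add_smul, one_smul]
    abel
  have e2 : p₃ - p₂ = -(x + (1 + lam / ‖z‖) • z) := by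
    rw [hp₃, hp₂, h2q, add_smul, one_smul]
    abel
  have hn1 : ‖p₃ - p₁‖ = ‖x - (1 + lam / ‖z‖) • z‖ := by rw [e1]
  have hn2 : ‖p₃ - p₂‖ = ‖x + (1 + lam / ‖z‖) • z‖ := by rw [e2, norm_neg]
  refine ⟨hn1, hn2, fun h => ⟨by rw [← hn2, ← h, hn1], ?_⟩⟩
  have hlpos : 0 < lam := by
    rw [hlam]
    rcases eq_or_ne (x + z) 0 with h0 | h0
    · exfalso
      have hx : x = -z := by
        have := eq_neg_of_add_eq_zero_left h0
        simpa using this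
      apply hz
      have : ‖x - z‖ = 0 := by rw [← hI, h0, norm_zero]
      have hxz : x = z := by
        have := sub_eq_zero.mp (norm_eq_zero.mp this)
        exact this
      have : z = -z := hxz ▸ hx
      have h2 : (2:ℝ) • z = 0 := by rw [two_smul]; nth_rewrite 2 [this]; abel
      simpa using (smul_eq_zero.mp h2).resolve_left (by norm_num)
    · exact norm_pos_iff.mpr h0
  have : 0 < lam / ‖z‖ := div_pos hlpos (lt_of_le_of_ne (norm_nonneg z) (Ne.symm hzn))
  linarith
end
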